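/- (Monotonicity of exit points.) With a fixed continuous profile $\nu$ and fixed continuous environment $B^{(1)},\dots,B^{(n)}$, define the exit point $Z_\nu(x,n) = \sup \{ z \le x : L_\nu(x,n) = \nu(z) + L((z,1),(x,n)) \}$, where $L_\nu(x,n) = \sup_{z \le x} \{ \nu(z) + L((z,1),(x,n)) \}$ (suprema assumed finite and attained). Then $Z_\nu(y,n)$ is non-decreasing in $y$: if $x \le y$ then $Z_\nu(x,n) \le Z_\nu(y,n)$. -/

import Mathlib

/-!
Exchanging the two geodesics to `(x, n)` from `(a, 1)` and to `(y, n)` from `(b, 1)` for their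
pointwise minimum and maximum gives the quadrangle inequality
`L(a, x) + L(b, y) ≤ L(b, x) + L(a, y)` for `b ≤ a ≤ x ≤ y`. If the exit point `b` of `y` were
strictly left of the exit point `a` of `x`, this inequality would make `a` a maximizer for `y`
as well, contradicting the maximality of `b`.
-/

/-- The set of passage times of staircase paths from `(x, k)` to `(y, l)` in the
Brownian last-passage percolation model with environment `B`. -/
def lppSet (B : ℕ → ℝ → ℝ) (k l : ℕ) (x y : ℝ) : Set ℝ :=
  {v | ∃ z : ℕ → ℝ, z (k - 1) = x ∧ z l = y ∧
    (∀ i : ℕ, k ≤ i → i ≤ l → z (i - 1) ≤ z i) ∧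
    v = ∑ i ∈ Finset.Icc k l, (B i (z i) - B i (z (i - 1)))}

theorem apply_min_add_apply_max {α β : Type*} [LinearOrder α] [AddCommMagma β]
    (f : α → β) (s t : α) : f (min s t) + f (max s t) = f s + f t := by
  rcases le_total s t with h | h
  · rw [min_eq_left h, max_eq_right h]
  · rw [min_eq_right h, max_eq_left h, add_comm]

theorem exists_add_eq_of_mem_lppSet {B : ℕ → ℝ → ℝ} {k l : ℕ} {a b x y v w : ℝ}
    (hv : v ∈ lppSet B k l a x) (hw : w ∈ lppSet B k l b y) :
    ∃ v' ∈ lppSet B k l (min a b) (min x y), ∃ w' ∈ lppSet B k l (max a b) (max x y),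
      v + w = v' + w' := by
  obtain ⟨p, hp₀, hpl, hp, rfl⟩ := hv
  obtain ⟨q, hq₀, hql, hq, rfl⟩ := hw
  refine ⟨_, ⟨fun i ↦ min (p i) (q i), hp₀ ▸ hq₀ ▸ rfl, hpl ▸ hql ▸ rfl,
      fun i hki hil ↦ min_le_min (hp i hki hil) (hq i hki hil), rfl⟩,
    _, ⟨fun i ↦ max (p i) (q i), hp₀ ▸ hq₀ ▸ rfl, hpl ▸ hql ▸ rfl,
      fun i hki hil ↦ max_le_max (hp i hki hil) (hq i hki hil), rfl⟩, ?_⟩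
  rw [← Finset.sum_add_distrib, ← Finset.sum_add_distrib]
  refine Finset.sum_congr rfl fun i _ ↦ ?_
  have hi := apply_min_add_apply_max (B i) (p i) (q i)
  have hi' := apply_min_add_apply_max (B i) (p (i - 1)) (q (i - 1))
  linarith

theorem lpp_quadrangle {B : ℕ → ℝ → ℝ} {k l : ℕ} {L : ℝ → ℝ → ℝ}
    (hL : ∀ z x, z ≤ x → IsGreatest (lppSet B k l z x) (L z x))
    {a b x y : ℝ} (hba : b ≤ a) (hax : a ≤ x) (hxy : x ≤ y) :
    L a x + L b y ≤ L b x + L a y := by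
  obtain ⟨v, hv, w, hw, hsum⟩ :=
    exists_add_eq_of_mem_lppSet (hL a x hax).1 (hL b y (by linarith)).1
  rw [min_eq_right hba, min_eq_left hxy] at hv
  rw [max_eq_left hba, max_eq_right hxy] at hw
  rw [hsum]
  exact add_le_add ((hL b x (hba.trans hax)).2 hv) ((hL a y (hax.trans hxy)).2 hw)

theorem greatest_maximizer_le_of_quadrangle {F : ℝ → ℝ → ℝ} {M N a b x y : ℝ}
    (hF : ∀ b a, b ≤ a → a ≤ x → F a x + F b y ≤ F b x + F a y)
    (hM : IsGreatest {v | ∃ z ≤ x, v = F z x} M) (hN : IsGreatest {v | ∃ z ≤ y, v = F z y} N)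
    (ha : IsGreatest {z | z ≤ x ∧ M = F z x} a) (hb : IsGreatest {z | z ≤ y ∧ N = F z y} b)
    (hxy : x ≤ y) : a ≤ b := by
  obtain ⟨⟨hax, hMa⟩, -⟩ := ha
  obtain ⟨⟨hby, hNb⟩, hb_max⟩ := hb
  by_contra! hba
  have hbx : F b x ≤ F a x := hMa ▸ hM.2 ⟨b, hba.le.trans hax, rfl⟩
  have hay : F a y ≤ N := hN.2 ⟨a, hax.trans hxy, rfl⟩
  have hquad := hF b a hba.le hax
  have : a ≤ b := hb_max ⟨hax.trans hxy, by linarith⟩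
  linarith

theorem exitPoint_monotone_general (B : ℕ → ℝ → ℝ)
    (ν : ℝ → ℝ)
    (Lenv : ℕ → ℕ → ℝ → ℝ → ℝ)
    (hEnv : ∀ (k l : ℕ) (z x : ℝ), 1 ≤ k → k ≤ l → z ≤ x →
      IsGreatest (lppSet B k l z x) (Lenv k l z x))
    (Lν Z : ℝ → ℕ → ℝ)
    (hL : ∀ (x : ℝ) (n : ℕ), 1 ≤ n →
      IsGreatest {v | ∃ z ≤ x, v = ν z + Lenv 1 n z x} (Lν x n))
    (hZ : ∀ (x : ℝ) (n : ℕ), 1 ≤ n →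
      IsGreatest {z | z ≤ x ∧ Lν x n = ν z + Lenv 1 n z x} (Z x n))
    (n : ℕ) (hn : 1 ≤ n) (x y : ℝ) (hxy : x ≤ y) :
    Z x n ≤ Z y n := by
  refine greatest_maximizer_le_of_quadrangle (F := fun z w ↦ ν z + Lenv 1 n z w) ?_
    (hL x n hn) (hL y n hn) (hZ x n hn) (hZ y n hn) hxy
  intro b a hba hax
  have := lpp_quadrangle (fun z w hzw ↦ hEnv 1 n z w le_rfl hn hzw) hba hax hxy
  linarith

/-- Monotonicity of exit points: with a fixed continuous profile `ν` and fixed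
continuous environment, the rightmost exit point
`Z x n = sup { z ≤ x : Lν x n = ν z + L((z,1),(x,n)) }` is non-decreasing in the
spatial argument: `x ≤ y → Z x n ≤ Z y n`. -/
theorem exitPoint_monotone (B : ℕ → ℝ → ℝ) (hB : ∀ i, Continuous (B i))
    (ν : ℝ → ℝ) (hν : Continuous ν)
    (Lenv : ℕ → ℕ → ℝ → ℝ → ℝ)
    (hEnv : ∀ (k l : ℕ) (z x : ℝ), 1 ≤ k → k ≤ l → z ≤ x →
      IsGreatest (lppSet B k l z x) (Lenv k l z x))
    (Lν Z : ℝ → ℕ → ℝ)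
    (hL : ∀ (x : ℝ) (n : ℕ), 1 ≤ n →
      IsGreatest {v | ∃ z ≤ x, v = ν z + Lenv 1 n z x} (Lν x n))
    (hZ : ∀ (x : ℝ) (n : ℕ), 1 ≤ n →
      IsGreatest {z | z ≤ x ∧ Lν x n = ν z + Lenv 1 n z x} (Z x n))
    (n : ℕ) (hn : 1 ≤ n) (x y : ℝ) (hxy : x ≤ y) :
    Z x n ≤ Z y n :=
  exitPoint_monotone_general B ν Lenv hEnv Lν Z hL hZ n hn x y hxy
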